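/- If V is non-decreasing in each device-age coordinate A_n (n ∈ 𝒩₁) and non-decreasing in its destination-age argument Δ (for every fixed h), then the Bellman image T V is non-decreasing in each device-age coordinate A_n, n ∈ 𝒩₁ (for every fixed Δ and h). -/

import Mathlib

open Finset

/-- Validity of a device-age vector: ages in `{1,…,Âₙ}` for type-I devices (those in `N1`),
and age `0` for type-II devices. -/
def validAge {N : Type*} (N1 : Finset N) (Ahat : N → ℕ) (A : N → ℕ) : Prop :=
  (∀ n ∈ N1, 1 ≤ A n ∧ A n ≤ Ahat n) ∧ ∀ n ∉ N1, A n = 0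

/-- Destination-age update `D(A,Δ,u)`: if `u` is a full schedule (`|u| = M`), the new age is
`min(maxₙ uₙ·Aₙ + 1, Δ̂)`; otherwise it is `min(Δ+1, Δ̂)`. Actions are encoded as the
finset of scheduled devices. -/
def destUpdate {N : Type*} (M Δhat : ℕ) (A : N → ℕ) (Δ : ℕ) (u : Finset N) : ℕ :=
  if u.card = M then min (u.sup A + 1) Δhat else min (Δ + 1) Δhat

/-- Next device-age vector given that the set `S ⊆ N1` of type-I devices receives
fresh status packets. -/
def nextAge {N : Type*} [DecidableEq N] (N1 : Finset N) (Ahat : N → ℕ)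
    (S : Finset N) (A : N → ℕ) : N → ℕ :=
  fun n => if n ∈ N1 then (if n ∈ S then 1 else min (A n + 1) (Ahat n)) else 0

/-- Probability that exactly the devices in `S` receive arrivals. -/
noncomputable def arrWeight {N : Type*} [DecidableEq N] (N1 : Finset N) (lam : N → ℝ)
    (S : Finset N) : ℝ :=
  (∏ n ∈ S, lam n) * ∏ n ∈ N1 \ S, (1 - lam n)

/-- Probability of the next channel state vector `h` under independent components. -/
noncomputable def chanWeight {N : Type*} [Fintype N] {H : N → Type*}
    (q : ∀ n, H n → ℝ) (h : ∀ n, H n) : ℝ := ∏ n, q n (h n)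

/-- One-step energy cost `c(u,h) = Σₙ βₙ uₙ (Cˢₙ + Cᵘₙ(hₙ))`. -/
noncomputable def energyCost {N : Type*} {H : N → Type*} (β Cs : N → ℝ)
    (Cu : ∀ n, H n → ℝ) (u : Finset N) (h : ∀ n, H n) : ℝ :=
  ∑ n ∈ u, β n * (Cs n + Cu n (h n))

/-- Q-function `J_V(A,Δ,h,u) = Δ + c(u,h) + E[V(A', D(A,Δ,u), h')]`. -/
noncomputable def Qfun {N : Type*} [Fintype N] [DecidableEq N] {H : N → Type*}
    [∀ n, Fintype (H n)] (N1 : Finset N) (M Δhat : ℕ) (Ahat : N → ℕ) (lam : N → ℝ)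
    (q : ∀ n, H n → ℝ) (β Cs : N → ℝ) (Cu : ∀ n, H n → ℝ)
    (V : (N → ℕ) → ℕ → (∀ n, H n) → ℝ)
    (A : N → ℕ) (Δ : ℕ) (h : ∀ n, H n) (u : Finset N) : ℝ :=
  (Δ : ℝ) + energyCost β Cs Cu u h +
    ∑ S ∈ N1.powerset, arrWeight N1 lam S *
      ∑ h' : ∀ n, H n, chanWeight q h' *
        V (nextAge N1 Ahat S A) (destUpdate M Δhat A Δ u) h'

/-- Bellman operator: `(T V)(A,Δ,h) = min over feasible u of J_V(A,Δ,h,u)`. -/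
noncomputable def bellman {N : Type*} [Fintype N] [DecidableEq N] {H : N → Type*}
    [∀ n, Fintype (H n)] (N1 : Finset N) (M Δhat : ℕ) (Ahat : N → ℕ) (lam : N → ℝ)
    (q : ∀ n, H n → ℝ) (β Cs : N → ℝ) (Cu : ∀ n, H n → ℝ)
    (V : (N → ℕ) → ℕ → (∀ n, H n) → ℝ) :
    (N → ℕ) → ℕ → (∀ n, H n) → ℝ :=
  fun A Δ h =>
    (Finset.univ.filter (fun u : Finset N => u.card ≤ M)).inf'
      ⟨∅, by simp⟩ (Qfun N1 M Δhat Ahat lam q β Cs Cu V A Δ h)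

/-- `u` is optimal at state `(A,Δ,h)` under `V`. -/
def isOptimal {N : Type*} [Fintype N] [DecidableEq N] {H : N → Type*}
    [∀ n, Fintype (H n)] (N1 : Finset N) (M Δhat : ℕ) (Ahat : N → ℕ) (lam : N → ℝ)
    (q : ∀ n, H n → ℝ) (β Cs : N → ℝ) (Cu : ∀ n, H n → ℝ)
    (V : (N → ℕ) → ℕ → (∀ n, H n) → ℝ)
    (A : N → ℕ) (Δ : ℕ) (h : ∀ n, H n) (u : Finset N) : Prop :=
  ∀ v : Finset N, v.card ≤ M →
    Qfun N1 M Δhat Ahat lam q β Cs Cu V A Δ h u ≤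
    Qfun N1 M Δhat Ahat lam q β Cs Cu V A Δ h v

/-!
The Bellman image is a minimum over actions, so it suffices to compare the Q-functions of
each fixed action `u`. Raising the device ages `A` raises every next device-age vector and,
through the maximum over scheduled devices, the next destination age; since `V` is monotone in
both arguments and the transition weights are nonnegative, the expected continuation value
can only grow, while the immediate cost `Δ + c(u,h)` does not depend on `A`.
-/

section AgeMonotonicity

variable {N : Type*}

lemma nextAge_valid [DecidableEq N] {N1 : Finset N} {Ahat : N → ℕ}
    (hAhat : ∀ n ∈ N1, 1 ≤ Ahat n) (S : Finset N) (A : N → ℕ) :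
    validAge N1 Ahat (nextAge N1 Ahat S A) := by
  refine ⟨fun n hn => ?_, fun n hn => by simp [nextAge, hn]⟩
  simp only [nextAge, if_pos hn]
  split
  · exact ⟨le_rfl, hAhat n hn⟩
  · exact ⟨le_min (by omega) (hAhat n hn), min_le_right _ _⟩

lemma nextAge_mono [DecidableEq N] (N1 : Finset N) (Ahat : N → ℕ) (S : Finset N)
    {A A' : N → ℕ} (hle : ∀ n, A n ≤ A' n) (n : N) :
    nextAge N1 Ahat S A n ≤ nextAge N1 Ahat S A' n := by
  unfold nextAge
  split_ifs
  exacts [le_rfl, min_le_min_right _ (Nat.add_le_add_right (hle n) 1), le_rfl]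

lemma destUpdate_mono (M Δhat Δ : ℕ) (u : Finset N) {A A' : N → ℕ}
    (hle : ∀ n, A n ≤ A' n) : destUpdate M Δhat A Δ u ≤ destUpdate M Δhat A' Δ u := by
  have hsup : u.sup A ≤ u.sup A' := Finset.sup_mono_fun fun n _ => hle n
  unfold destUpdate
  split <;> omega

lemma one_le_destUpdate {M Δhat : ℕ} (hΔhat : 1 ≤ Δhat) (A : N → ℕ) (Δ : ℕ) (u : Finset N) :
    1 ≤ destUpdate M Δhat A Δ u := by
  unfold destUpdate
  split <;> omega

lemma destUpdate_le (M Δhat : ℕ) (A : N → ℕ) (Δ : ℕ) (u : Finset N) :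
    destUpdate M Δhat A Δ u ≤ Δhat := by
  unfold destUpdate
  split <;> exact min_le_right _ _

lemma arrWeight_nonneg [DecidableEq N] {N1 : Finset N} {lam : N → ℝ}
    (hlam : ∀ n ∈ N1, 0 ≤ lam n ∧ lam n ≤ 1) {S : Finset N} (hS : S ⊆ N1) :
    0 ≤ arrWeight N1 lam S :=
  mul_nonneg (prod_nonneg fun n hn => (hlam n (hS hn)).1)
    (prod_nonneg fun n hn => sub_nonneg.2 (hlam n (mem_sdiff.1 hn).1).2)

lemma chanWeight_nonneg [Fintype N] {H : N → Type*} {q : ∀ n, H n → ℝ}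
    (hq0 : ∀ n (x : H n), 0 ≤ q n x) (h : ∀ n, H n) : 0 ≤ chanWeight q h :=
  prod_nonneg fun n _ => hq0 n (h n)

lemma Qfun_mono_age [Fintype N] [DecidableEq N] {H : N → Type*} [∀ n, Fintype (H n)]
    {N1 : Finset N} {M Δhat : ℕ} {Ahat : N → ℕ} {lam : N → ℝ} {q : ∀ n, H n → ℝ}
    {V : (N → ℕ) → ℕ → (∀ n, H n) → ℝ} (β Cs : N → ℝ) (Cu : ∀ n, H n → ℝ)
    (hAhat : ∀ n ∈ N1, 1 ≤ Ahat n) (hΔhat : 1 ≤ Δhat)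
    (hlam : ∀ n ∈ N1, 0 ≤ lam n ∧ lam n ≤ 1) (hq0 : ∀ n (x : H n), 0 ≤ q n x)
    (hV1 : ∀ (A A' : N → ℕ) (Δ : ℕ) (h : ∀ n, H n), validAge N1 Ahat A →
      validAge N1 Ahat A' → (∀ n, A n ≤ A' n) → 1 ≤ Δ → Δ ≤ Δhat →
      V A Δ h ≤ V A' Δ h)
    (hV2 : ∀ (A : N → ℕ) (h : ∀ n, H n) (Δ Δ' : ℕ), validAge N1 Ahat A →
      1 ≤ Δ → Δ ≤ Δ' → Δ' ≤ Δhat → V A Δ h ≤ V A Δ' h)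
    {A A' : N → ℕ} (hle : ∀ n, A n ≤ A' n) (Δ : ℕ) (h : ∀ n, H n) (u : Finset N) :
    Qfun N1 M Δhat Ahat lam q β Cs Cu V A Δ h u ≤
      Qfun N1 M Δhat Ahat lam q β Cs Cu V A' Δ h u := by
  unfold Qfun
  gcongr with S hS h' _
  · exact arrWeight_nonneg hlam (mem_powerset.1 hS)
  · exact chanWeight_nonneg hq0 h'
  have hD1 := one_le_destUpdate (M := M) hΔhat A Δ u
  have hDle := destUpdate_mono M Δhat Δ u hle
  have hDhat := destUpdate_le M Δhat A' Δ u
  calc V (nextAge N1 Ahat S A) (destUpdate M Δhat A Δ u) h'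
      ≤ V (nextAge N1 Ahat S A') (destUpdate M Δhat A Δ u) h' :=
        hV1 _ _ _ _ (nextAge_valid hAhat S A) (nextAge_valid hAhat S A')
          (nextAge_mono N1 Ahat S hle) hD1 (hDle.trans hDhat)
    _ ≤ V (nextAge N1 Ahat S A') (destUpdate M Δhat A' Δ u) h' :=
        hV2 _ _ _ _ (nextAge_valid hAhat S A') hD1 hDle hDhat

end AgeMonotonicity

theorem stmt5_general
    {N : Type*} [Fintype N] [DecidableEq N] {H : N → Type*}
    [∀ n, Fintype (H n)]
    (N1 : Finset N) (M Δhat : ℕ) (Ahat : N → ℕ) (lam : N → ℝ)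
    (q : ∀ n, H n → ℝ) (β Cs : N → ℝ) (Cu : ∀ n, H n → ℝ)
    (hAhat : ∀ n ∈ N1, 1 ≤ Ahat n)
    (hlam : ∀ n ∈ N1, 0 ≤ lam n ∧ lam n ≤ 1)
    (hq0 : ∀ n (x : H n), 0 ≤ q n x)
    (V : (N → ℕ) → ℕ → (∀ n, H n) → ℝ)
    (hV1 : ∀ (A A' : N → ℕ) (Δ : ℕ) (h : ∀ n, H n), validAge N1 Ahat A →
      validAge N1 Ahat A' → (∀ n, A n ≤ A' n) → 1 ≤ Δ → Δ ≤ Δhat →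
      V A Δ h ≤ V A' Δ h)
    (hV2 : ∀ (A : N → ℕ) (h : ∀ n, H n) (Δ Δ' : ℕ), validAge N1 Ahat A →
      1 ≤ Δ → Δ ≤ Δ' → Δ' ≤ Δhat → V A Δ h ≤ V A Δ' h)
    (A A' : N → ℕ)
    (hle : ∀ n, A n ≤ A' n)
    (Δ : ℕ) (h1 : 1 ≤ Δ) (h2 : Δ ≤ Δhat) (h : ∀ n, H n) :
    bellman N1 M Δhat Ahat lam q β Cs Cu V A Δ h ≤
    bellman N1 M Δhat Ahat lam q β Cs Cu V A' Δ h :=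
  inf'_mono_fun fun u _ =>
    Qfun_mono_age β Cs Cu hAhat (h1.trans h2) hlam hq0 hV1 hV2 hle Δ h u

/-- If `V` is non-decreasing in each device-age coordinate `Aₙ` (`n ∈ N1`) and non-decreasing
in the destination age `Δ` (for every fixed `h`), then the Bellman image `T V` is
non-decreasing in each device-age coordinate (for every fixed `Δ` and `h`). -/
theorem stmt5
    {N : Type*} [Fintype N] [DecidableEq N] {H : N → Type*}
    [∀ n, Fintype (H n)] [∀ n, LinearOrder (H n)]
    (N1 : Finset N) (M Δhat : ℕ) (Ahat : N → ℕ) (lam : N → ℝ)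
    (q : ∀ n, H n → ℝ) (β Cs : N → ℝ) (Cu : ∀ n, H n → ℝ)
    (hM1 : 1 ≤ M) (hM2 : M ≤ Fintype.card N) (hΔhat : 1 ≤ Δhat)
    (hAhat : ∀ n ∈ N1, 1 ≤ Ahat n)
    (hlam : ∀ n ∈ N1, 0 ≤ lam n ∧ lam n ≤ 1)
    (hq0 : ∀ n (x : H n), 0 ≤ q n x) (hq1 : ∀ n, ∑ x : H n, q n x = 1)
    (hCu0 : ∀ n (x : H n), 0 ≤ Cu n x) (hCuA : ∀ n, Antitone (Cu n))
    (hCs0 : ∀ n, 0 ≤ Cs n) (hCsI : ∀ n ∈ N1, Cs n = 0)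
    (hβ : ∀ n, 0 < β n)
    (V : (N → ℕ) → ℕ → (∀ n, H n) → ℝ)
    (hV1 : ∀ (A A' : N → ℕ) (Δ : ℕ) (h : ∀ n, H n), validAge N1 Ahat A →
      validAge N1 Ahat A' → (∀ n, A n ≤ A' n) → 1 ≤ Δ → Δ ≤ Δhat →
      V A Δ h ≤ V A' Δ h)
    (hV2 : ∀ (A : N → ℕ) (h : ∀ n, H n) (Δ Δ' : ℕ), validAge N1 Ahat A →
      1 ≤ Δ → Δ ≤ Δ' → Δ' ≤ Δhat → V A Δ h ≤ V A Δ' h)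
    (A A' : N → ℕ) (hA : validAge N1 Ahat A) (hA' : validAge N1 Ahat A')
    (hle : ∀ n, A n ≤ A' n)
    (Δ : ℕ) (h1 : 1 ≤ Δ) (h2 : Δ ≤ Δhat) (h : ∀ n, H n) :
    bellman N1 M Δhat Ahat lam q β Cs Cu V A Δ h ≤
    bellman N1 M Δhat Ahat lam q β Cs Cu V A' Δ h :=
  stmt5_general N1 M Δhat Ahat lam q β Cs Cu hAhat hlam hq0 V hV1 hV2 A A' hle Δ h1 h2 h
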